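/- Let d ≥ 2 and let W be a linear subspace of ℝ^d with 1 ≤ dim W ≤ d − 1. There exists a constant C > 0 (depending only on d) such that for every R ≥ 0, ∫_{S^{d−1}} (1 + R · dist(y, W))^{−1} dσ(y) ≤ C (1 + R)^{−1/2}, where σ is the normalized (probability) surface measure on the unit sphere S^{d−1} ⊆ ℝ^d induced by Lebesgue measure, and dist(y, W) is the Euclidean distance from y to W. -/

import Mathlib

/-!
Pick a unit vector `n ⟂ W`, so that `dist(y, W) ≥ |⟪n, y⟫|`, and put `t = (1 + R)^{-1/2}`.
On the band `|⟪n, y⟫| ≤ t` the integrand is at most `1`; off it, it is at most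
`(1 + R t)⁻¹ ≤ 2 t`. The band has measure `O(t)`: the cone over it lies in the slab
`{|⟪n, x⟫| ≤ t} ∩ B(0, 1)`, which fits in a box of volume `2^d t`.
-/

open MeasureTheory

noncomputable section

/-- The normalized (probability) surface measure on the unit sphere `S^{d-1} ⊆ ℝ^d` induced by
Lebesgue measure. -/
def sphereMeasure (d : ℕ) : Measure (Metric.sphere (0 : EuclideanSpace ℝ (Fin d)) 1) :=
  ((volume : Measure (EuclideanSpace ℝ (Fin d))).toSphere Set.univ)⁻¹ •
    (volume : Measure (EuclideanSpace ℝ (Fin d))).toSphere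

open Metric Set Module
open scoped ENNReal RealInnerProductSpace

section

variable {E : Type*} [NormedAddCommGroup E] [InnerProductSpace ℝ E]

lemma Submodule.exists_norm_eq_one_mem_orthogonal {K : Submodule ℝ E}
    [K.HasOrthogonalProjection] (hK : K ≠ ⊤) : ∃ n ∈ Kᗮ, ‖n‖ = 1 := by
  obtain ⟨v, hv, hv0⟩ := Kᗮ.exists_mem_ne_zero_of_ne_bot (by rwa [Ne, K.orthogonal_eq_bot_iff])
  exact ⟨‖v‖⁻¹ • v, Kᗮ.smul_mem _ hv, norm_smul_inv_norm hv0⟩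

lemma abs_inner_le_infDist {K : Submodule ℝ E} {n : E} (hn : ‖n‖ = 1) (hnK : n ∈ Kᗮ) (y : E) :
    |⟪n, y⟫| ≤ infDist y K := by
  refine (le_infDist ⟨0, K.zero_mem⟩).2 fun w hw => ?_
  calc |⟪n, y⟫| = |⟪n, y - w⟫| := by
        rw [inner_sub_right, K.inner_left_of_mem_orthogonal hw hnK, sub_zero]
    _ ≤ dist y w := by simpa [hn, dist_eq_norm] using abs_real_inner_le_norm n (y - w)

variable [FiniteDimensional ℝ E] [MeasurableSpace E] [BorelSpace E]

lemma volume_abs_inner_le_inter_closedBall_le {n : E} (hn : ‖n‖ = 1) (t : ℝ) :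
    volume ({x : E | |⟪n, x⟫| ≤ t} ∩ closedBall 0 1) ≤ 2 ^ finrank ℝ E * ENNReal.ofReal t := by
  have : Nontrivial E := nontrivial_of_ne n 0 (by rintro rfl; simp at hn)
  obtain ⟨k, hk⟩ : ∃ k, finrank ℝ E = k + 1 := Nat.exists_eq_add_one.2 finrank_pos
  obtain ⟨b, hb⟩ := Orthonormal.exists_orthonormalBasis_extension_of_card_eq
    (v := fun _ : Fin (k + 1) => n) (s := {0}) (by simpa using hk)
    ⟨fun _ => hn, fun i j hij => absurd (Subsingleton.elim i j) hij⟩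
  let box : Set (Fin (k + 1) → ℝ) := univ.pi (Fin.cons (Icc (-t) t) fun _ => Icc (-1) 1)
  have hsub : {x : E | |⟪n, x⟫| ≤ t} ∩ closedBall 0 1 ⊆ (fun x => (b.repr x).ofLp) ⁻¹' box := by
    rintro x ⟨hxn, hx⟩ i -
    simp only [b.repr_apply_apply]
    refine Fin.cases ?_ (fun j => ?_) i
    · simpa [hb 0 rfl, abs_le] using hxn
    · have := (abs_real_inner_le_norm (b j.succ) x).trans (by simpa using hx)
      simpa [abs_le] using this
  have hbox : MeasurableSet box :=
    .univ_pi fun i => Fin.cases measurableSet_Icc (fun _ => measurableSet_Icc) i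
  calc volume ({x : E | |⟪n, x⟫| ≤ t} ∩ closedBall 0 1)
      ≤ volume ((fun x => (b.repr x).ofLp) ⁻¹' box) := measure_mono hsub
    _ = volume box :=
      ((PiLp.volume_preserving_ofLp _).comp b.measurePreserving_repr).measure_preimage
        hbox.nullMeasurableSet
    _ = 2 ^ finrank ℝ E * ENNReal.ofReal t := by
      simp only [box, volume_pi_pi, Fin.prod_univ_succ, Fin.cons_zero, Fin.cons_succ,
        Real.volume_Icc, Finset.prod_const, Finset.card_univ, Fintype.card_fin, hk]
      norm_num [← two_mul, ENNReal.ofReal_mul, pow_succ]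
      ring

lemma measurableSet_abs_inner_le (n : E) (t : ℝ) :
    MeasurableSet {y : sphere (0 : E) 1 | |⟪n, (y : E)⟫| ≤ t} :=
  measurableSet_le (by fun_prop) measurable_const

lemma toSphere_abs_inner_le_le {n : E} (hn : ‖n‖ = 1) (t : ℝ) :
    volume.toSphere {y : sphere (0 : E) 1 | |⟪n, (y : E)⟫| ≤ t} ≤
      finrank ℝ E * (2 ^ finrank ℝ E * ENNReal.ofReal t) := by
  rw [Measure.toSphere_apply' _ (measurableSet_abs_inner_le n t)]
  gcongr
  refine (measure_mono ?_).trans (volume_abs_inner_le_inter_closedBall_le hn t)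
  rintro _ ⟨r, ⟨hr0, hr1⟩, _, ⟨y, hy, rfl⟩, rfl⟩
  refine ⟨?_, ?_⟩
  · calc |⟪n, r • (y : E)⟫| = r * |⟪n, (y : E)⟫| := by
          rw [real_inner_smul_right, abs_mul, abs_of_pos hr0]
      _ ≤ t := (mul_le_of_le_one_left (abs_nonneg _) hr1.le).trans hy
  · simp [norm_smul, abs_of_pos hr0, hr1.le]

lemma normalized_toSphere_real_abs_inner_le_le {n : E} (hn : ‖n‖ = 1) {t : ℝ} (ht : 0 ≤ t) :
    (((volume : Measure E).toSphere univ)⁻¹ • (volume : Measure E).toSphere).real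
        {y : sphere (0 : E) 1 | |⟪n, (y : E)⟫| ≤ t} ≤
      2 ^ finrank ℝ E * t / volume.real (ball (0 : E) 1) := by
  have : Nontrivial E := nontrivial_of_ne n 0 (by rintro rfl; simp at hn)
  have hband : (volume : Measure E).toSphere.real {y : sphere (0 : E) 1 | |⟪n, (y : E)⟫| ≤ t} ≤
      finrank ℝ E * (2 ^ finrank ℝ E * t) := by
    simpa [measureReal_def, ENNReal.toReal_mul, ht] using
      ENNReal.toReal_mono (by simp [ENNReal.mul_eq_top]) (toSphere_abs_inner_le_le hn t)
  have hd : (0 : ℝ) < finrank ℝ E := by exact_mod_cast finrank_pos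
  have hV : 0 < volume.real (ball (0 : E) 1) :=
    ENNReal.toReal_pos (measure_ball_pos _ _ one_pos).ne' measure_ball_lt_top.ne
  rw [measureReal_ennreal_smul_apply, ENNReal.toReal_inv, ← measureReal_def,
    Measure.toSphere_real_apply_univ]
  calc _ ≤ (finrank ℝ E * volume.real (ball (0 : E) 1))⁻¹ *
        (finrank ℝ E * (2 ^ finrank ℝ E * t)) := by gcongr
    _ = _ := by field_simp

end


instance isProbabilityMeasure_sphereMeasure {d : ℕ} [NeZero d] :
    IsProbabilityMeasure (sphereMeasure d) := by
  have : NeZero (volume : Measure (EuclideanSpace ℝ (Fin d))).toSphere :=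
    ⟨Measure.toSphere_ne_zero _⟩
  exact isProbabilityMeasureSMul

lemma integral_inv_one_add_mul_le {α : Type*} [MeasurableSpace α] {μ : Measure α}
    [IsProbabilityMeasure μ] {g : α → ℝ} (hg : Measurable g) (hg0 : ∀ x, 0 ≤ g x) {R t : ℝ}
    (hR : 0 ≤ R) (ht : 0 ≤ t) {A : Set α} (hA : MeasurableSet A) (hgA : ∀ x ∉ A, t ≤ g x) :
    ∫ x, (1 + R * g x)⁻¹ ∂μ ≤ μ.real A + (1 + R * t)⁻¹ := by
  have hle_one : ∀ x, (1 + R * g x)⁻¹ ≤ 1 := fun x =>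
    inv_le_one_of_one_le₀ (le_add_of_nonneg_right (mul_nonneg hR (hg0 x)))
  have hpt : ∀ x, (1 + R * g x)⁻¹ ≤ A.indicator 1 x + (1 + R * t)⁻¹ := by
    intro x
    by_cases hx : x ∈ A
    · simpa [hx] using (hle_one x).trans (le_add_of_nonneg_right (by positivity))
    · have : 1 + R * t ≤ 1 + R * g x := by gcongr; exact hgA x hx
      simpa [hx] using inv_anti₀ (by positivity) this
  have hint : Integrable (fun x => (1 + R * g x)⁻¹) μ :=
    .mono' (integrable_const 1) (by fun_prop) (.of_forall fun x => by
      have := hg0 x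
      rw [Real.norm_of_nonneg (by positivity)]; exact hle_one x)
  calc ∫ x, (1 + R * g x)⁻¹ ∂μ ≤ ∫ x, (A.indicator 1 x + (1 + R * t)⁻¹) ∂μ :=
        integral_mono hint (((integrable_const 1).indicator hA).add (integrable_const _)) hpt
    _ = μ.real A + (1 + R * t)⁻¹ := by
        rw [integral_add ((integrable_const 1).indicator hA) (integrable_const _),
          integral_indicator_one hA, integral_const, probReal_univ, one_smul]

lemma inv_one_add_mul_rpow_neg_half_le {R : ℝ} (hR : 0 ≤ R) :
    (1 + R * (1 + R) ^ (-(1 / 2) : ℝ))⁻¹ ≤ 2 * (1 + R) ^ (-(1 / 2) : ℝ) := by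
  rw [Real.rpow_neg (by linarith), ← Real.sqrt_eq_rpow]
  obtain ⟨u, hu1, rfl⟩ : ∃ u, 1 ≤ u ∧ R = u ^ 2 - 1 :=
    ⟨√(1 + R), Real.one_le_sqrt.2 (by linarith), by rw [Real.sq_sqrt (by linarith)]; ring⟩
  rw [show 1 + (u ^ 2 - 1) = u ^ 2 by ring, Real.sqrt_sq (by linarith)]
  have hu0 : 0 < u := by linarith
  have hpos : 0 < 1 + (u ^ 2 - 1) * u⁻¹ := by positivity
  rw [inv_le_iff_one_le_mul₀ hpos]
  field_simp
  nlinarith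

theorem sphere_integral_decay_general (d : ℕ) :
    ∃ C : ℝ, 0 < C ∧
      ∀ W : Submodule ℝ (EuclideanSpace ℝ (Fin d)),
        1 ≤ Module.finrank ℝ W → Module.finrank ℝ W ≤ d - 1 →
        ∀ R : ℝ, 0 ≤ R →
          (∫ y, (1 + R * Metric.infDist (y : EuclideanSpace ℝ (Fin d)) (W : Set _))⁻¹
              ∂(sphereMeasure d)) ≤
            C * (1 + R) ^ (-(1 / 2) : ℝ) := by
  refine ⟨2 ^ d / volume.real (ball (0 : EuclideanSpace ℝ (Fin d)) 1) + 2, by positivity, ?_⟩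
  intro W hW₁ hW₂ R hR
  have hd : 0 < d := by omega
  have : NeZero d := ⟨hd.ne'⟩
  have hW : W ≠ ⊤ := by
    rintro rfl
    rw [finrank_top, finrank_euclideanSpace_fin] at hW₂
    omega
  obtain ⟨n, hnW, hn⟩ := W.exists_norm_eq_one_mem_orthogonal hW
  set t : ℝ := (1 + R) ^ (-(1 / 2) : ℝ)
  have ht : 0 ≤ t := by positivity
  calc _ ≤ (sphereMeasure d).real {y | |⟪n, (y : EuclideanSpace ℝ (Fin d))⟫| ≤ t} +
          (1 + R * t)⁻¹ :=
        integral_inv_one_add_mul_le (by fun_prop) (fun _ => infDist_nonneg) hR ht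
          (measurableSet_abs_inner_le n t)
          fun y hy => (not_le.1 hy).le.trans (abs_inner_le_infDist hn hnW y)
    _ ≤ 2 ^ d * t / volume.real (ball (0 : EuclideanSpace ℝ (Fin d)) 1) + 2 * t := by
        gcongr
        · simpa [sphereMeasure] using normalized_toSphere_real_abs_inner_le_le hn ht
        · exact inv_one_add_mul_rpow_neg_half_le hR
    _ = _ := by ring

/-- The basic sphere integral estimate: for `W` a linear subspace of `ℝ^d` with
`1 ≤ dim W ≤ d-1`, `∫_{S^{d-1}} (1 + R dist(y, W))⁻¹ dσ(y) = O((1+R)^{-1/2})`. -/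
theorem sphere_integral_decay (d : ℕ) (hd : 2 ≤ d) :
    ∃ C : ℝ, 0 < C ∧
      ∀ W : Submodule ℝ (EuclideanSpace ℝ (Fin d)),
        1 ≤ Module.finrank ℝ W → Module.finrank ℝ W ≤ d - 1 →
        ∀ R : ℝ, 0 ≤ R →
          (∫ y, (1 + R * Metric.infDist (y : EuclideanSpace ℝ (Fin d)) (W : Set _))⁻¹
              ∂(sphereMeasure d)) ≤
            C * (1 + R) ^ (-(1 / 2) : ℝ) :=
  sphere_integral_decay_general d
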